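/- Let M and i be integers with M ≥ 3 and 6 ≤ i ≤ M+3. Define the following convex cones in ℝ³ (cone{…} denotes nonnegative real linear combinations): C₀ = cone{(0,0,1)}; C₁ = cone{(0,1,0),(0,0,1)}; C₂ = C₃ = cone{(1,1,0),(0,1,0),(0,0,1)}; C₄ = cone{(2,3,0),(1,3,0),(0,1,1),(0,0,1)}; C₅ = cone{(1,2,0),(0,1,2)}; C₆ = cone{(1,2,0)}. For an integer 0 ≤ s ≤ 6 let T_s : ℝ³ → ℝ³ be the linear map T_s(a,b,c) = (C(i−2, i−s)·a, C(i−1, i−s)·b, C(i, i−s)·c), where C(x,y) is the binomial coefficient (equal to 0 when y > x). Then the convex cone generated by the union of the sets T_s(C_s) over all integers s with max(0, i−M) ≤ s ≤ 6 equals cone{(5, 2i−2, 0), (0,1,0), (0,0,1)}. -/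

import Mathlib

/-!
Both sides equal `W(2i - 2)`, where `W(m) = {(d₂, d₁, d₀) | d₂ ≥ 0, d₀ ≥ 0, m d₂ ≤ 5 d₁}`.
The identity `(i - 1) C(i-2, i-s) = (s - 1) C(i-1, i-s)` shows that `T_s` maps `W(2s - 2)` into
`W(2i - 2)`, and each `C_s` lies in `W(2s - 2)`. Conversely, `T_6 (1, 2, 0)` spans the extremal
ray `(5, 2i - 2, 0)` of `W(2i - 2)` and `T_3` gives the two coordinate rays; `s = 3` is in range
because `i ≤ M + 3`.
-/

open Finset

/-- `nonnegSpan S` is the set of (finite) nonnegative real linear combinations of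
elements of `S`, i.e. the convex cone generated by `S` (together with `0`). -/
def nonnegSpan {V : Type*} [AddCommMonoid V] [Module ℝ V] (S : Set V) : Set V :=
  { x | ∃ (k : ℕ) (c : Fin k → ℝ) (v : Fin k → V),
      (∀ t, 0 ≤ c t) ∧ (∀ t, v t ∈ S) ∧ x = ∑ t, c t • v t }

/-- The cones `C₀, …, C₆` in `ℝ³`: the pseudoeffective cones of `s`-cycles on the
universal plane conic, in the coordinates `(d₂, d₁, d₀)`. -/
def C12 : ℕ → Set (ℝ × ℝ × ℝ)
  | 0 => nonnegSpan {(0, 0, 1)}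
  | 1 => nonnegSpan {(0, 1, 0), (0, 0, 1)}
  | 2 => nonnegSpan {(1, 1, 0), (0, 1, 0), (0, 0, 1)}
  | 3 => nonnegSpan {(1, 1, 0), (0, 1, 0), (0, 0, 1)}
  | 4 => nonnegSpan {(2, 3, 0), (1, 3, 0), (0, 1, 1), (0, 0, 1)}
  | 5 => nonnegSpan {(1, 2, 0), (0, 1, 2)}
  | 6 => nonnegSpan {(1, 2, 0)}
  | _ => ∅

/-- The diagonal map `T_s(a,b,c) = (C(i−2,i−s)·a, C(i−1,i−s)·b, C(i,i−s)·c)`. -/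
def T12 (i s : ℕ) : ℝ × ℝ × ℝ → ℝ × ℝ × ℝ := fun p =>
  (((i - 2).choose (i - s) : ℝ) * p.1,
    ((i - 1).choose (i - s) : ℝ) * p.2.1,
    (i.choose (i - s) : ℝ) * p.2.2)

open PointedCone

theorem nonnegSpan_eq_hull {V : Type*} [AddCommMonoid V] [Module ℝ V] (S : Set V) :
    nonnegSpan S = hull ℝ S := by
  ext x
  simp only [nonnegSpan, Set.mem_ofPred_eq, SetLike.mem_coe, Submodule.mem_span_set']
  constructor
  · rintro ⟨k, c, v, hc, hv, rfl⟩
    exact ⟨k, fun t => ⟨c t, hc t⟩, fun t => ⟨v t, hv t⟩, rfl⟩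
  · rintro ⟨k, c, v, rfl⟩
    exact ⟨k, fun t => c t, fun t => v t, fun t => (c t).2, fun t => (v t).2, rfl⟩

theorem mem_nonnegSpan_of_mem {V : Type*} [AddCommMonoid V] [Module ℝ V] {S : Set V} {x : V}
    (hx : x ∈ S) : x ∈ nonnegSpan S := by
  rw [nonnegSpan_eq_hull]
  exact subset_hull hx

def wedgeCone (a b : ℝ) : PointedCone ℝ (ℝ × ℝ × ℝ) where
  carrier := {p | 0 ≤ p.1 ∧ 0 ≤ p.2.2 ∧ b * p.1 ≤ a * p.2.1}
  add_mem' := by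
    rintro ⟨x, y, z⟩ ⟨x', y', z'⟩ ⟨hx, hz, h⟩ ⟨hx', hz', h'⟩
    exact ⟨add_nonneg hx hx', add_nonneg hz hz', by simp only [Prod.mk_add_mk]; linarith⟩
  zero_mem' := by simp
  smul_mem' := by
    rintro ⟨c, hc⟩ ⟨x, y, z⟩ ⟨hx, hz, h⟩
    refine ⟨mul_nonneg hc hx, mul_nonneg hc hz, ?_⟩
    simp only [Nonneg.mk_smul, Prod.smul_mk, smul_eq_mul]
    nlinarith

@[simp] theorem mem_wedgeCone {a b x y z : ℝ} :
    (x, y, z) ∈ wedgeCone a b ↔ 0 ≤ x ∧ 0 ≤ z ∧ b * x ≤ a * y := Iff.rfl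

theorem hull_eq_wedgeCone {a : ℝ} (ha : 0 < a) (b : ℝ) :
    hull ℝ {(a, b, 0), (0, 1, 0), (0, 0, 1)} = wedgeCone a b := by
  apply le_antisymm
  · rw [Submodule.span_le]
    simp [Set.insert_subset_iff, mul_comm, ha.le]
  · rintro ⟨x, y, z⟩ hp
    obtain ⟨hx, hz, h⟩ := mem_wedgeCone.1 hp
    have e : ((x, y, z) : ℝ × ℝ × ℝ) = (x / a) • (a, b, 0) + (y - b * x / a) • (0, 1, 0)
        + z • (0, 0, 1) := by
      ext <;> simp <;> field_simp; ring
    rw [e]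
    refine add_mem (add_mem ?_ ?_) ?_ <;> refine smul_mem _ ?_ (subset_hull (by simp))
    · positivity
    · rw [sub_nonneg, div_le_iff₀ ha]
      linarith
    · exact hz

theorem sub_one_mul_choose_sub_two {i s : ℕ} (hi : 2 ≤ i) (hs : s ≤ i) :
    ((i : ℝ) - 1) * ((i - 2).choose (i - s) : ℝ) = ((s : ℝ) - 1) * ((i - 1).choose (i - s) : ℝ) := by
  obtain ⟨n, rfl⟩ : ∃ n, i = n + 2 := ⟨i - 2, by omega⟩
  rcases Nat.eq_zero_or_pos s with rfl | hs0
  · simp [Nat.choose_eq_zero_of_lt]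
  · have h := Nat.choose_mul_succ_eq n (n + 2 - s)
    rw [show n + 1 - (n + 2 - s) = s - 1 by omega] at h
    rw [show n + 2 - 2 = n by omega, show n + 2 - 1 = n + 1 by omega]
    have h' : ((n.choose (n + 2 - s) * (n + 1) : ℕ) : ℝ)
        = (((n + 1).choose (n + 2 - s) * (s - 1) : ℕ) : ℝ) := by rw [h]
    push_cast [Nat.cast_sub hs0] at h' ⊢
    linear_combination h'

theorem T12_mapsTo_wedgeCone {i s : ℕ} (hi : 2 ≤ i) (hs : s ≤ i) (a : ℝ) :
    Set.MapsTo (T12 i s) (wedgeCone a (2 * s - 2)) (wedgeCone a (2 * i - 2)) := by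
  rintro ⟨x, y, z⟩ hp
  obtain ⟨hx, hz, h⟩ := mem_wedgeCone.1 hp
  have hB : (0 : ℝ) ≤ (i - 1).choose (i - s) := Nat.cast_nonneg _
  refine mem_wedgeCone.2 ⟨by positivity, by positivity, ?_⟩
  linear_combination (2 * x) * sub_one_mul_choose_sub_two hi hs + mul_le_mul_of_nonneg_left h hB

theorem C12_subset_wedgeCone {s : ℕ} (hs : s ≤ 6) : C12 s ⊆ wedgeCone 5 (2 * s - 2) := by
  interval_cases s <;>
  · simp only [C12, nonnegSpan_eq_hull, SetLike.coe_subset_coe, Submodule.span_le,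
      Set.insert_subset_iff, Set.singleton_subset_iff, SetLike.mem_coe, mem_wedgeCone]
    norm_num

theorem T12_zero_one_zero (i s : ℕ) :
    T12 i s (0, 1, 0) = ((i - 1).choose (i - s) : ℝ) • (0, 1, 0) := by
  simp [T12]

theorem T12_zero_zero_one (i s : ℕ) :
    T12 i s (0, 0, 1) = (i.choose (i - s) : ℝ) • (0, 0, 1) := by
  simp [T12]

theorem T12_six_one_two_zero {i : ℕ} (hi : 6 ≤ i) :
    T12 i 6 (1, 2, 0) = ((i - 2).choose (i - 6) / 5 : ℝ) • (5, 2 * (i : ℝ) - 2, 0) := by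
  have key := sub_one_mul_choose_sub_two (s := 6) (by omega) hi
  push_cast at key
  simp only [T12, Prod.smul_mk, smul_eq_mul, Prod.mk.injEq]
  exact ⟨by ring, by linear_combination (-2 / 5) * key, by ring⟩

theorem stmt_12_general (M i : ℕ) (hi : 6 ≤ i) (hiM : i ≤ M + 3) :
    nonnegSpan (⋃ s ∈ Set.Icc (max 0 (i - M)) 6, T12 i s '' C12 s)
      = nonnegSpan {((5 : ℝ), (2 * (i : ℝ) - 2), (0 : ℝ)), (0, 1, 0), (0, 0, 1)} := by
  set U := ⋃ s ∈ Set.Icc (max 0 (i - M)) 6, T12 i s '' C12 s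
  have hU : ∀ s ∈ Set.Icc (max 0 (i - M)) 6, ∀ p ∈ C12 s, T12 i s p ∈ hull ℝ U :=
    fun s hs p hp => subset_hull (Set.mem_biUnion hs ⟨p, hp, rfl⟩)
  have h3 : 3 ∈ Set.Icc (max 0 (i - M)) 6 := ⟨by omega, by omega⟩
  have h6 : 6 ∈ Set.Icc (max 0 (i - M)) 6 := ⟨by omega, le_rfl⟩
  rw [nonnegSpan_eq_hull, nonnegSpan_eq_hull, hull_eq_wedgeCone (by norm_num)]
  refine congrArg SetLike.coe (le_antisymm ?_ ?_)
  · rw [Submodule.span_le]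
    simp only [U, Set.iUnion_subset_iff, Set.image_subset_iff]
    exact fun s hs => (C12_subset_wedgeCone hs.2).trans
      (T12_mapsTo_wedgeCone (by omega) (hs.2.trans hi) 5)
  · rw [← hull_eq_wedgeCone (by norm_num), Submodule.span_le, Set.insert_subset_iff,
      Set.insert_subset_iff, Set.singleton_subset_iff]
    have hA := Nat.choose_pos (show i - 6 ≤ i - 2 by omega)
    have hB := Nat.choose_pos (show i - 3 ≤ i - 1 by omega)
    have hC := Nat.choose_pos (show i - 3 ≤ i by omega)
    refine ⟨?_, ?_, ?_⟩
    · have h := hU 6 h6 (1, 2, 0) (mem_nonnegSpan_of_mem (by simp))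
      rwa [T12_six_one_two_zero hi, smul_mem_iff _ (by positivity)] at h
    · have h := hU 3 h3 (0, 1, 0) (mem_nonnegSpan_of_mem (by simp))
      rwa [T12_zero_one_zero, smul_mem_iff _ (by positivity)] at h
    · have h := hU 3 h3 (0, 0, 1) (mem_nonnegSpan_of_mem (by simp))
      rwa [T12_zero_zero_one, smul_mem_iff _ (by positivity)] at h

/-- For integers `M ≥ 3` and `6 ≤ i ≤ M+3`, the convex cone generated by the union of
the sets `T_s(C_s)` over all integers `s` with `max(0, i−M) ≤ s ≤ 6` equals
`cone{(5, 2i−2, 0), (0,1,0), (0,0,1)}`. -/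
theorem stmt_12 (M i : ℕ) (hM : 3 ≤ M) (hi : 6 ≤ i) (hiM : i ≤ M + 3) :
    nonnegSpan (⋃ s ∈ Set.Icc (max 0 (i - M)) 6, T12 i s '' C12 s)
      = nonnegSpan {((5 : ℝ), (2 * (i : ℝ) - 2), (0 : ℝ)), (0, 1, 0), (0, 0, 1)} :=
  stmt_12_general M i hi hiM
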